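/- arXiv:2308.08013 — 2 statements merged into one kernel-verified Lean document; each statement's English description precedes it below -/
import Mathlib

section
/- Let S = {s_1 < s_2 < s_3 < ...} ⊆ ℕ have upper Banach density d*(S) = α > 0, let A be a finite alphabet with |A| ≥ 2, and let X ⊆ A^ℤ be a subshift such that for every u ∈ A^ℕ there exists x_u ∈ X with x_u(s_n) = u(n) for all n ∈ ℕ. Then the topological entropy satisfies h(X) ≥ (α/2)·ln|A| > 0; in particular no such X can have zero entropy. -/
open Filter Topology

/-- The left shift `σ` on `A^ℤ`: `(σ x)(n) = x(n+1)`. -/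
def leftShift {A : Type*} (x : ℤ → A) : ℤ → A := fun n => x (n + 1)

/-- A subshift: a nonempty, closed, shift-invariant subset of `A^ℤ`. -/
def IsSubshift {A : Type*} [TopologicalSpace A] (X : Set (ℤ → A)) : Prop :=
  X.Nonempty ∧ IsClosed X ∧ leftShift '' X = X

/-- The language `L_n(X)`: all `n`-letter words appearing in points of `X`. -/
def lang {A : Type*} (X : Set (ℤ → A)) (n : ℕ) : Set (Fin n → A) :=
  {w | ∃ x ∈ X, ∃ i : ℤ, ∀ j : Fin n, w j = x (i + 1 + (j : ℕ))}

/-- Zero topological entropy of a subshift: `(ln |L_n(X)|)/n → 0`. -/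
def ZeroEntropy {A : Type*} (X : Set (ℤ → A)) : Prop :=
  Tendsto (fun n : ℕ => Real.log ((lang X n).ncard) / n) atTop (nhds 0)

/-- `S ⊆ ℕ` has upper Banach density `α`:
`sup_k |S ∩ {k, …, k+n-1}| / n → α` as `n → ∞`. -/
def HasBanachDensity (S : Set ℕ) (α : ℝ) : Prop :=
  Tendsto (fun n : ℕ => (⨆ k : ℕ, ((S ∩ Set.Ico k (k + n)).ncard : ℝ)) / n)
    atTop (nhds α)

/-- Counting lemma: the language of `X` at length `n` contains at least
`|A|^m` words, where `m = |S ∩ [k, k+n)|`. -/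
lemma key_count {A : Type*} [Fintype A] (hA : 2 ≤ Fintype.card A)
    (s : ℕ → ℕ) (hs : StrictMono s) (X : Set (ℤ → A))
    (h : ∀ u : ℕ → A, ∃ x ∈ X, ∀ n : ℕ, x (s n) = u n) (n k : ℕ) :
    Fintype.card A ^ (Set.range s ∩ Set.Ico k (k + n)).ncard ≤ (lang X n).ncard := by
  classical
  have hAne : Nonempty A := Fintype.card_pos_iff.mp (by omega)
  set T : Set ℕ := s ⁻¹' Set.Ico k (k + n) with hTdef
  have hTfin : T.Finite :=
    (Set.finite_Iio (k + n)).subset (fun i hi => lt_of_le_of_lt hs.le_apply hi.2)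
  have hTeq : Set.range s ∩ Set.Ico k (k + n) = s '' T := by
    rw [hTdef, Set.image_preimage_eq_inter_range, Set.inter_comm]
  have hm : (Set.range s ∩ Set.Ico k (k + n)).ncard = T.ncard := by
    rw [hTeq, Set.ncard_image_of_injective _ hs.injective]
  haveI : Finite T := hTfin
  -- build an injection from `T → A` into `lang X n`
  let U : (T → A) → (ℕ → A) := fun v i =>
    if hi : i ∈ T then v ⟨i, hi⟩ else Classical.arbitrary A
  let xx : (T → A) → (ℤ → A) := fun v => (h (U v)).choose
  have hxX : ∀ v, xx v ∈ X := fun v => (h (U v)).choose_spec.1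
  have hxs : ∀ v i, xx v (s i) = U v i := fun v => (h (U v)).choose_spec.2
  let W : (T → A) → (Fin n → A) := fun v j => xx v ((k : ℤ) + (j : ℕ))
  have hW : ∀ v, W v ∈ lang X n := by
    intro v
    refine ⟨xx v, hxX v, (k : ℤ) - 1, fun j => ?_⟩
    show xx v ((k : ℤ) + (j : ℕ)) = _
    congr 1
    ring
  have hval : ∀ (v : T → A) (i : ℕ) (hi : i ∈ T), W v ⟨s i - k, by
      have := hi.1; have := hi.2; omega⟩ = v ⟨i, hi⟩ := by
    intro v i hi
    have h1 : (k : ℤ) + ((s i - k : ℕ) : ℕ) = (s i : ℤ) := by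
      have := hi.1; push_cast; omega
    show xx v ((k : ℤ) + ((s i - k : ℕ) : ℕ)) = v ⟨i, hi⟩
    rw [h1, hxs v i]
    simp only [U, dif_pos hi]
  have hWinj : Function.Injective W := by
    intro v v' hvv
    funext p
    obtain ⟨i, hi⟩ := p
    rw [← hval v i hi, ← hval v' i hi, hvv]
  let F : (T → A) → (lang X n) := fun v => ⟨W v, hW v⟩
  have hFinj : Function.Injective F := fun v v' e => hWinj (congrArg Subtype.val e)
  haveI : Finite (lang X n) := Set.toFinite _
  have hle := Nat.card_le_card_of_injective F hFinj
  rw [Nat.card_fun, Nat.card_eq_fintype_card, Nat.card_coe_set_eq,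
    Nat.card_coe_set_eq] at hle
  rwa [hm]

/-- If `S = {s 0 < s 1 < ⋯} ⊆ ℕ` has upper Banach density `α > 0`, `|A| ≥ 2`,
and `X ⊆ A^ℤ` is a subshift realizing every `u ∈ A^ℕ` along `S`, then the topological entropy
of `X` is at least `(α/2)·ln|A| > 0`; in particular `X` does not have zero entropy. -/
theorem stmt1 {A : Type*} [Fintype A] [TopologicalSpace A] [DiscreteTopology A]
    (hA : 2 ≤ Fintype.card A)
    (s : ℕ → ℕ) (hs : StrictMono s) (α : ℝ) (hα : 0 < α)
    (hd : HasBanachDensity (Set.range s) α)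
    (X : Set (ℤ → A)) (hX : IsSubshift X)
    (h : ∀ u : ℕ → A, ∃ x ∈ X, ∀ n : ℕ, x (s n) = u n) :
    (0 < α / 2 * Real.log (Fintype.card A)) ∧
    (α / 2 * Real.log (Fintype.card A) ≤
      atTop.liminf (fun n : ℕ => Real.log ((lang X n).ncard) / n)) ∧
    ¬ ZeroEntropy X := by
  classical
  have hlog : 0 < Real.log (Fintype.card A) :=
    Real.log_pos (by exact_mod_cast (by omega : 1 < Fintype.card A))
  have hc : 0 < α / 2 * Real.log (Fintype.card A) := mul_pos (by linarith) hlog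
  -- eventual lower bound on `log |L_n| / n`
  have hev : ∀ᶠ n : ℕ in atTop,
      α / 2 * Real.log (Fintype.card A) ≤ Real.log ((lang X n).ncard) / n := by
    have h34 : ∀ᶠ n : ℕ in atTop, 3 * α / 4 ≤
        (⨆ k : ℕ, ((Set.range s ∩ Set.Ico k (k + n)).ncard : ℝ)) / n :=
      hd.eventually_const_le (by linarith)
    filter_upwards [h34, eventually_ge_atTop (⌈(4 : ℝ) / α⌉₊ + 1)] with n hn hn4
    have hn0 : 0 < (n : ℝ) := by exact_mod_cast (by omega : 0 < n)
    have hnα : 4 / α ≤ (n : ℝ) := le_trans (Nat.le_ceil _) (by exact_mod_cast by omega)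
    have hsup : 3 * α / 4 * n ≤
        ⨆ k : ℕ, ((Set.range s ∩ Set.Ico k (k + n)).ncard : ℝ) := by
      rw [le_div_iff₀ hn0] at hn
      linarith [hn]
    -- pick `k` with `|S ∩ [k,k+n)| > sup - 1`
    obtain ⟨k, hk⟩ : ∃ k : ℕ,
        (⨆ k : ℕ, ((Set.range s ∩ Set.Ico k (k + n)).ncard : ℝ)) - 1
          < ((Set.range s ∩ Set.Ico k (k + n)).ncard : ℝ) := by
      apply exists_lt_of_lt_ciSup
      exact sub_lt_self _ one_pos
    set m := (Set.range s ∩ Set.Ico k (k + n)).ncard with hmdef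
    have hm2 : α / 2 * n ≤ (m : ℝ) := by
      have h1 : (1 : ℝ) ≤ α / 4 * n := by
        rw [div_le_iff₀ hα] at hnα
        nlinarith
      nlinarith [hsup, hk]
    have hcard := key_count hA s hs X h n k
    have hlogle : (m : ℝ) * Real.log (Fintype.card A) ≤ Real.log ((lang X n).ncard) := by
      have h1 : (0 : ℝ) < (Fintype.card A : ℝ) ^ m := by positivity
      have h2 : ((Fintype.card A : ℝ)) ^ m ≤ ((lang X n).ncard : ℝ) := by
        exact_mod_cast hcard
      calc (m : ℝ) * Real.log (Fintype.card A) = Real.log ((Fintype.card A : ℝ) ^ m) := by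
            rw [Real.log_pow]
        _ ≤ _ := Real.log_le_log h1 h2
    rw [le_div_iff₀ hn0]
    calc α / 2 * Real.log (Fintype.card A) * n
        = (α / 2 * n) * Real.log (Fintype.card A) := by ring
      _ ≤ (m : ℝ) * Real.log (Fintype.card A) :=
          mul_le_mul_of_nonneg_right hm2 hlog.le
      _ ≤ Real.log ((lang X n).ncard) := hlogle
  -- upper bound, for coboundedness
  have hub : ∀ n : ℕ, Real.log ((lang X n).ncard) / n ≤ Real.log (Fintype.card A) := by
    intro n
    rcases Nat.eq_zero_or_pos n with rfl | hn
    · simp [hlog.le]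
    · have hn0 : 0 < (n : ℝ) := by exact_mod_cast hn
      rw [div_le_iff₀ hn0]
      have hsub : (lang X n).ncard ≤ Fintype.card A ^ n := by
        have := Set.ncard_le_ncard (Set.subset_univ (lang X n)) (Set.finite_univ)
        rwa [Set.ncard_univ, Nat.card_eq_fintype_card, Fintype.card_fun,
          Fintype.card_fin] at this
      rcases Nat.eq_zero_or_pos (lang X n).ncard with h0 | hpos
      · rw [h0]; simp; positivity
      · calc Real.log ((lang X n).ncard)
            ≤ Real.log ((Fintype.card A : ℝ) ^ n) :=
              Real.log_le_log (by exact_mod_cast hpos) (by exact_mod_cast hsub)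
          _ = Real.log (Fintype.card A) * n := by rw [Real.log_pow]; ring
  have hcob : IsCoboundedUnder (· ≥ ·) atTop
      (fun n : ℕ => Real.log ((lang X n).ncard) / n) :=
    isCoboundedUnder_ge_of_le atTop hub
  refine ⟨hc, le_liminf_of_le hcob hev, ?_⟩
  intro h0
  have hlt : ∀ᶠ n : ℕ in atTop, Real.log ((lang X n).ncard) / n
      < α / 2 * Real.log (Fintype.card A) := h0.eventually_lt_const hc
  obtain ⟨n, h1, h2⟩ := (hev.and hlt).exists
  linarith
end

section
/- Let m ≥ 2, let α ∈ 𝕋 = ℝ/ℤ, and let f : 𝕋 → 𝕋 be continuous. Define T : 𝕋^m → 𝕋^m by T(x_1, x_2, x_3, ..., x_m) = (x_1 + α, x_2 + f(x_1), x_3 + x_2, ..., x_m + x_{m−1}). Then T is a homeomorphism of 𝕋^m with zero topological entropy. -/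
open Filter Topology

section Aux

open Dynamics Set UniformSpace Function

local notation "𝕋" => UnitAddCircle

/-- The increment added to coordinate `j` by the skew product. -/
private noncomputable def Wc (α : 𝕋) (f : 𝕋 → 𝕋) (k : ℕ) (x : Fin k → 𝕋) (j : Fin k) : 𝕋 :=
  if (j : ℕ) = 0 then α
  else if (j : ℕ) = 1 then f (x ⟨0, Nat.lt_of_le_of_lt (Nat.zero_le _) j.isLt⟩)
  else x ⟨(j : ℕ) - 1, Nat.lt_of_le_of_lt (Nat.sub_le _ _) j.isLt⟩

private noncomputable def Wmap (α : 𝕋) (f : 𝕋 → 𝕋) (k : ℕ) : (Fin k → 𝕋) → (Fin k → 𝕋) :=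
  fun x j => x j + Wc α f k x j

/-- The cocycle for the last coordinate. -/
private noncomputable def phiK (α : 𝕋) (f : 𝕋 → 𝕋) (k : ℕ) : (Fin k → 𝕋) → 𝕋 := fun y =>
  if h : k = 0 then α
  else if h1 : k = 1 then f (y ⟨0, by omega⟩)
  else y ⟨k - 1, by omega⟩

private lemma Wc_congr {α : 𝕋} {f : 𝕋 → 𝕋} {k : ℕ} {x y : Fin k → 𝕋} {j : Fin k}
    (h : ∀ i : Fin k, (i : ℕ) < (j : ℕ) → x i = y i) : Wc α f k x j = Wc α f k y j := by
  unfold Wc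
  by_cases h0 : (j : ℕ) = 0
  · simp [h0]
  · by_cases h1 : (j : ℕ) = 1
    · simp only [h0, h1, if_false, if_true]
      rw [h ⟨0, _⟩ (by show 0 < (j:ℕ); omega)]
    · simp only [h0, h1, if_false]
      rw [h ⟨(j : ℕ) - 1, _⟩ (by show (j:ℕ)-1 < (j:ℕ); omega)]

private lemma continuous_Wc {α : 𝕋} {f : 𝕋 → 𝕋} (hf : Continuous f) {k : ℕ} (j : Fin k) :
    Continuous fun x : Fin k → 𝕋 => Wc α f k x j := by
  unfold Wc
  by_cases h0 : (j : ℕ) = 0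
  · simp only [h0, if_true]; exact continuous_const
  · by_cases h1 : (j : ℕ) = 1
    · simp only [h0, h1, if_false, if_true]
      exact hf.comp (continuous_apply _)
    · simp only [h0, h1, if_false]
      exact continuous_apply _

private lemma continuous_phiK {α : 𝕋} {f : 𝕋 → 𝕋} (hf : Continuous f) (k : ℕ) :
    Continuous (phiK α f k) := by
  unfold phiK
  rcases k with - | k
  · simp only [dif_pos rfl]; exact continuous_const
  · rcases k with - | k
    · simp only [Nat.one_ne_zero, dif_neg, dif_pos rfl, reduceDIte]
      exact hf.comp (continuous_apply _)
    · have h0 : (k+2) ≠ 0 := by omega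
      have h1 : (k+2) ≠ 1 := by omega
      simp only [dif_neg h0, dif_neg h1]
      exact continuous_apply _

private lemma Wc_castSucc {α : 𝕋} {f : 𝕋 → 𝕋} {k : ℕ} (x : Fin (k+1) → 𝕋) (j : Fin k) :
    Wc α f (k+1) x j.castSucc = Wc α f k (x ∘ Fin.castSucc) j := by
  unfold Wc
  simp only [Fin.coe_castSucc, Function.comp_apply]
  by_cases h0 : (j : ℕ) = 0
  · simp [h0]
  · by_cases h1 : (j : ℕ) = 1
    · simp only [h0, h1, if_false, if_true, Nat.one_ne_zero]
      exact congrArg (fun t => f (x t)) (Fin.ext rfl)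
    · simp only [h0, h1, if_false]
      exact congrArg x (Fin.ext rfl)

private lemma Wc_snoc_last {α : 𝕋} {f : 𝕋 → 𝕋} {k : ℕ} (y : Fin k → 𝕋) (g : 𝕋) :
    Wc α f (k+1) (Fin.snoc y g) (Fin.last k) = phiK α f k y := by
  unfold Wc phiK
  simp only [Fin.val_last]
  rcases k with - | k
  · simp
  · rcases k with - | k
    · have hs : Fin.snoc (α := fun _ => 𝕋) y g (⟨0, Nat.zero_lt_succ _⟩ : Fin (1+1)) =
          y ⟨0, Nat.zero_lt_one⟩ :=
        by
          have e : (⟨0, Nat.zero_lt_succ _⟩ : Fin (1+1)) = Fin.castSucc ⟨0, Nat.zero_lt_one⟩ :=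
            Fin.ext (by simp)
          rw [e, Fin.snoc_castSucc]
      have e0 : (0 : Fin (1+1)) = ⟨0, Nat.zero_lt_succ _⟩ := rfl
      have e1 : (0 : Fin 1) = ⟨0, Nat.zero_lt_one⟩ := rfl
      simp only [e0, e1, hs]
      simp
    · have h0 : (k+2) ≠ 0 := by omega
      have h1 : (k+2) ≠ 1 := by omega
      rw [if_neg h0, if_neg h1, dif_neg h0, dif_neg h1]
      have : (⟨k+2-1, by omega⟩ : Fin (k+2+1)) = Fin.castSucc ⟨k+1, by omega⟩ := Fin.ext rfl
      rw [this, Fin.snoc_castSucc]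
      exact congrArg y (Fin.ext (by simp))

private lemma Wmap_snoc {α : 𝕋} {f : 𝕋 → 𝕋} {k : ℕ} (y : Fin k → 𝕋) (g : 𝕋) :
    Wmap α f (k+1) (Fin.snoc y g) = Fin.snoc (Wmap α f k y) (g + phiK α f k y) := by
  funext j
  induction j using Fin.lastCases with
  | last =>
    rw [Fin.snoc_last]
    simp only [Wmap]
    rw [Fin.snoc_last, Wc_snoc_last]
  | cast j =>
    rw [Fin.snoc_castSucc]
    simp only [Wmap]
    rw [Fin.snoc_castSucc, Wc_castSucc]
    have h2 : (Fin.snoc y g : Fin (k+1) → _) ∘ Fin.castSucc = y := by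
      funext i; simp [Fin.snoc_castSucc]
    rw [h2]

section Homeo

variable {α : 𝕋} {f : 𝕋 → 𝕋}

/-- The `i`-th elementary layer of the skew product, as a homeomorphism. -/
private noncomputable def layer (α : 𝕋) (f : 𝕋 → 𝕋) (hf : Continuous f) {m : ℕ} (i : Fin m) :
    (Fin m → 𝕋) ≃ₜ (Fin m → 𝕋) where
  toFun x := Function.update x i (x i + Wc α f m x i)
  invFun x := Function.update x i (x i - Wc α f m x i)
  left_inv x := by
    have hWc : ∀ v, Wc α f m (Function.update x i v) i = Wc α f m x i := fun v =>
      Wc_congr fun i' hi' => Function.update_of_ne (Fin.ne_of_lt (Fin.lt_def.2 hi')) _ _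
    simp only [Function.update_idem, Function.update_self, hWc]
    rw [add_sub_cancel_right, Function.update_eq_self]
  right_inv x := by
    have hWc : ∀ v, Wc α f m (Function.update x i v) i = Wc α f m x i := fun v =>
      Wc_congr fun i' hi' => Function.update_of_ne (Fin.ne_of_lt (Fin.lt_def.2 hi')) _ _
    simp only [Function.update_idem, Function.update_self, hWc]
    rw [sub_add_cancel, Function.update_eq_self]
  continuous_toFun := by
    exact continuous_id.update i ((continuous_apply i).add (continuous_Wc hf i))
  continuous_invFun := by
    exact continuous_id.update i ((continuous_apply i).sub (continuous_Wc hf i))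

private noncomputable def bigH (α : 𝕋) (f : 𝕋 → 𝕋) (hf : Continuous f) (m : ℕ) :
    (l : ℕ) → (Fin m → 𝕋) ≃ₜ (Fin m → 𝕋)
  | 0 => Homeomorph.refl _
  | l + 1 =>
    if h : l < m then (layer α f hf ⟨l, h⟩).trans (bigH α f hf m l) else bigH α f hf m l

private lemma bigH_apply (hf : Continuous f) (m : ℕ) :
    ∀ l, l ≤ m → ∀ (x : Fin m → 𝕋) (j : Fin m),
      bigH α f hf m l x j = if (j : ℕ) < l then x j + Wc α f m x j else x j := by
  intro l
  induction l with
  | zero => intro _ x j; simp [bigH]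
  | succ l ih =>
    intro hl x j
    have hlm : l < m := hl
    rw [bigH, dif_pos hlm]
    set y := layer α f hf ⟨l, hlm⟩ x with hy
    have hy_ne : ∀ j' : Fin m, j' ≠ ⟨l, hlm⟩ → y j' = x j' := fun j' hj' =>
      Function.update_of_ne hj' _ _
    have hy_eq : y ⟨l, hlm⟩ = x ⟨l, hlm⟩ + Wc α f m x ⟨l, hlm⟩ := Function.update_self _ _ _
    have := ih (le_of_lt hlm) y j
    rw [Homeomorph.trans_apply, ← hy, this]
    rcases lt_trichotomy (j : ℕ) l with h | h | h
    · rw [if_pos h, if_pos (by omega)]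
      have hjne : j ≠ ⟨l, hlm⟩ := by
        intro hj; rw [hj] at h; simp at h
      rw [hy_ne j hjne, Wc_congr (fun i' hi' => hy_ne i' (by
        intro he; rw [he] at hi'; simp at hi'; omega))]
    · rw [if_neg (by omega), if_pos (by omega)]
      have hje : j = ⟨l, hlm⟩ := Fin.ext h
      rw [hje, hy_eq]
    · rw [if_neg (by omega), if_neg (by omega)]
      exact hy_ne j (by intro he; rw [he] at h; simp at h)

private lemma Wmap_eq_bigH (hf : Continuous f) (m : ℕ) :
    Wmap α f m = ⇑(bigH α f hf m m) := by
  funext x j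
  rw [bigH_apply hf m m le_rfl x j, if_pos j.isLt]
  rfl

private lemma isHomeomorph_Wmap (hf : Continuous f) (m : ℕ) : IsHomeomorph (Wmap α f m) := by
  rw [Wmap_eq_bigH hf m]
  exact (bigH α f hf m m).isHomeomorph

end Homeo

section Entropy

open ENNReal EReal

private lemma coverEntropy_le_zero_of_subsingleton {Z : Type*} [UniformSpace Z] [Subsingleton Z]
    (g : Z → Z) : coverEntropy g Set.univ ≤ 0 := by
  refine iSup₂_le fun U hU => ?_
  have hM : ∀ n, coverMincard g Set.univ U n ≤ 1 := by
    intro n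
    rcases isEmpty_or_nonempty Z with hZ | hZ
    · rw [Set.univ_eq_empty_iff.2 hZ, coverMincard_empty]; exact zero_le_one
    · obtain ⟨z⟩ := hZ
      have hcov : IsDynCoverOf g Set.univ U n ({z} : Finset Z) := by
        intro y _
        refine ⟨z, by simp, ?_⟩
        rw [mem_dynEntourage]
        intro k _
        have : g^[k] y = g^[k] z := by rw [Subsingleton.elim y z]
        rw [this]
        exact refl_mem_uniformity hU
      simpa using hcov.coverMincard_le_card
  refine limsup_le_of_le (by isBoundedDefault) ?_
  filter_upwards [Filter.eventually_ge_atTop 1] with n hn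
  have h1 : log (coverMincard g Set.univ U n) ≤ 0 := by
    rw [← log_one]
    apply log_monotone
    rw [← ENat.toENNReal_one, ENat.toENNReal_le]
    exact hM n
  calc log (coverMincard g Set.univ U n) / n ≤ 0 / (n : EReal) :=
        div_le_div_right_of_nonneg (Nat.cast_nonneg' n) h1
    _ = 0 := EReal.zero_div

private lemma key_cover {Y : Type*} [MetricSpace Y] [CompactSpace Y] [Nonempty Y]
    (S : Y → Y) (φ : Y → 𝕋) {ε δ : ℝ} (hε : 0 < ε) (hδ : 0 < δ) (hδε : δ ≤ ε / 2)
    {p : ℕ} (hp : 0 < p)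
    (hmod : ∀ y y' : Y, dist y y' < δ → dist (φ y) (φ y') < ε / 8 / p)
    (N : Finset 𝕋) (q : 𝕋 → 𝕋) (hqN : ∀ g, q g ∈ N) (hqd : ∀ g, dist g (q g) < ε / 8)
    (n : ℕ) :
    coverMincard (fun pt : Y × 𝕋 => (S pt.1, pt.2 + φ pt.1)) Set.univ
        {u : (Y × 𝕋) × (Y × 𝕋) | dist u.1 u.2 < ε} n ≤
      coverMincard S Set.univ {u : Y × Y | dist u.1 u.2 < δ} n
        * (N.card : ℕ∞) ^ (n / p + 2) := by
  classical
  set Text : Y × 𝕋 → Y × 𝕋 := fun pt => (S pt.1, pt.2 + φ pt.1) with hText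
  set c : ℕ → Y → 𝕋 := fun k y => ∑ j ∈ Finset.range k, φ (S^[j] y) with hc
  have iter : ∀ (k : ℕ) (y : Y) (g : 𝕋), Text^[k] (y, g) = (S^[k] y, g + c k y) := by
    intro k
    induction k with
    | zero => intro y g; simp [hc]
    | succ k ih =>
      intro y g
      rw [Function.iterate_succ_apply', ih y g]
      show (S (S^[k] y), g + c k y + φ (S^[k] y)) = _
      rw [← Function.iterate_succ_apply' S]
      refine Prod.ext rfl ?_
      show g + c k y + φ (S^[k] y) = g + c (k + 1) y
      rw [add_assoc]
      congr 1
      rw [hc]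
      simp only
      rw [Finset.sum_range_succ]
  have hKpos : 0 < N.card := Finset.card_pos.2 ⟨q 0, hqN 0⟩
  rcases eq_top_or_lt_top (coverMincard S Set.univ {u : Y × Y | dist u.1 u.2 < δ} n)
    with htop | hfin
  · rw [htop, ENat.top_mul (pow_ne_zero _ (by exact_mod_cast hKpos.ne'))]
    exact le_top
  · obtain ⟨s, hs_cover, hs_card⟩ := (coverMincard_finite_iff _ _ _ n).1 hfin
    set r := n / p + 1 with hr
    have drift : ∀ (y₀ z : Y),
        (∀ k < n, dist (S^[k] y₀) (S^[k] z) < δ) →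
        ∀ a b : ℕ, a ≤ b → b ≤ n →
        dist (c b z - c b y₀) (c a z - c a y₀) ≤ (b - a : ℕ) * (ε / 8 / p) := by
      intro y₀ z hz a b hab hbn
      have hsum : (c b z - c b y₀) - (c a z - c a y₀) =
          ∑ i ∈ Finset.Ico a b, (φ (S^[i] z) - φ (S^[i] y₀)) := by
        rw [Finset.sum_sub_distrib, Finset.sum_Ico_eq_sub _ hab, Finset.sum_Ico_eq_sub _ hab]
        rw [hc]
        abel
      rw [dist_eq_norm, hsum]
      calc ‖∑ i ∈ Finset.Ico a b, (φ (S^[i] z) - φ (S^[i] y₀))‖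
          ≤ ∑ i ∈ Finset.Ico a b, ‖φ (S^[i] z) - φ (S^[i] y₀)‖ := norm_sum_le _ _
        _ ≤ (Finset.Ico a b).card • (ε / 8 / p) := by
            refine Finset.sum_le_card_nsmul _ _ _ fun i hi => ?_
            rw [← dist_eq_norm]
            have hin : i < n := lt_of_lt_of_le (Finset.mem_Ico.1 hi).2 hbn
            exact le_of_lt (hmod _ _ (by rw [dist_comm]; exact hz i hin))
        _ = (b - a : ℕ) * (ε / 8 / p) := by simp [Nat.card_Ico, nsmul_eq_mul]
    set lab : Y → Y → Fin r → 𝕋 :=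
      fun y₀ y j => q (c ((j : ℕ) * p) y - c ((j : ℕ) * p) y₀) with hlab
    set A : Y → (Fin r → 𝕋) → Set Y := fun y₀ v =>
      {y | y ∈ UniformSpace.ball y₀
            (dynEntourage S {u : Y × Y | dist u.1 u.2 < δ} n) ∧ lab y₀ y = v} with hA
    set R : Y → (Fin r → 𝕋) → Y := fun y₀ v =>
      if h : (A y₀ v).Nonempty then h.some else y₀ with hR
    set t : Finset (Y × 𝕋) :=
      (s ×ˢ ((Finset.univ : Finset (Fin r → {a // a ∈ N})) ×ˢ N)).image
        (fun z => (R z.1 (fun j => (z.2.1 j : 𝕋)), z.2.2)) with ht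
    have hcov : IsDynCoverOf Text Set.univ
        {u : (Y × 𝕋) × (Y × 𝕋) | dist u.1 u.2 < ε} n t := by
      rintro ⟨y, g⟩ -
      have hy := hs_cover (Set.mem_univ y)
      obtain ⟨y₀, hy₀s, hy₀b'⟩ := hy
      have hy₀b : y ∈ UniformSpace.ball y₀ (dynEntourage S {u : Y × Y | dist u.1 u.2 < δ} n) := by
        rw [mem_ball_dynEntourage]
        intro k hk
        have := mem_dynEntourage.1 hy₀b' k hk
        show dist _ _ < δ
        rw [dist_comm]; exact this
      set v : Fin r → {a // a ∈ N} := fun j => ⟨lab y₀ y j, hqN _⟩ with hv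
      have hyA : y ∈ A y₀ (fun j => (v j : 𝕋)) := ⟨hy₀b, rfl⟩
      have hne : (A y₀ (fun j => (v j : 𝕋))).Nonempty := ⟨y, hyA⟩
      set y' := R y₀ (fun j => (v j : 𝕋)) with hy'
      have hy'A : y' ∈ A y₀ (fun j => (v j : 𝕋)) := by
        rw [hy', hR]
        simp only [dif_pos hne]
        exact hne.some_mem
      have hmem : (y', q g) ∈ (t : Set (Y × 𝕋)) := by
        rw [ht]
        refine Finset.mem_coe.2 (Finset.mem_image.2 ⟨⟨y₀, v, q g⟩, ?_, rfl⟩)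
        exact Finset.mem_product.2 ⟨hy₀s, Finset.mem_product.2 ⟨Finset.mem_univ _, hqN g⟩⟩
      refine ⟨(y', q g), hmem, ?_⟩
      rw [mem_dynEntourage]
      intro k hk
      rw [Set.mem_setOf_eq, dist_comm]
      show Text^[k] (y, g) ∈ UniformSpace.ball (Text^[k] (y', q g))
        {u : (Y × 𝕋) × (Y × 𝕋) | dist u.1 u.2 < ε}
      have hdy : ∀ k' < n, dist (S^[k'] y₀) (S^[k'] y) < δ := by
        intro k' hk'
        have := mem_ball_dynEntourage.1 hy₀b k' hk'
        exact this
      have hdy' : ∀ k' < n, dist (S^[k'] y₀) (S^[k'] y') < δ := by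
        intro k' hk'
        have := mem_ball_dynEntourage.1 hy'A.1 k' hk'
        exact this
      rw [UniformSpace.ball, Set.mem_preimage, iter, iter, Set.mem_setOf_eq, Prod.dist_eq]
      apply max_lt
      · calc dist (S^[k] y') (S^[k] y)
            ≤ dist (S^[k] y') (S^[k] y₀) + dist (S^[k] y₀) (S^[k] y) := dist_triangle _ _ _
          _ < δ + δ := add_lt_add (by rw [dist_comm]; exact hdy' k hk) (hdy k hk)
          _ ≤ ε := by linarith
      · set j : ℕ := k / p with hj
        have hjr : j < r := by
          rw [hr, hj]
          have : k / p ≤ n / p := Nat.div_le_div_right (le_of_lt hk)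
          omega
        have hjpk : j * p ≤ k := Nat.div_mul_le_self k p
        have hsub : (k - j * p) ≤ p := by
          have h2 : p * j + k % p = k := by rw [hj]; exact Nat.div_add_mod k p
          have h3 : k % p < p := Nat.mod_lt _ hp
          have h4 : j * p = p * j := Nat.mul_comm _ _
          omega
        have hp' : (0:ℝ) < p := by exact_mod_cast hp
        have Ebound : ∀ z : Y, (∀ k' < n, dist (S^[k'] y₀) (S^[k'] z) < δ) →
            dist (c k z - c k y₀) (c (j * p) z - c (j * p) y₀) ≤ ε / 8 := by
          intro z hz
          refine le_trans (drift y₀ z hz (j * p) k hjpk (le_of_lt hk)) ?_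
          have hc1 : ((k - j * p : ℕ) : ℝ) ≤ (p : ℝ) := by exact_mod_cast hsub
          calc ((k - j*p : ℕ) : ℝ) * (ε/8/p) ≤ p * (ε/8/p) :=
                mul_le_mul_of_nonneg_right hc1 (by positivity)
            _ = ε/8 := by field_simp
        have E1 := Ebound y hdy
        have E2 := Ebound y' hdy'
        have hlabeq : lab y₀ y' ⟨j, hjr⟩ = lab y₀ y ⟨j, hjr⟩ := by
          rw [hy'A.2]
        have hqe : q (c (j*p) y - c (j*p) y₀) = q (c (j*p) y' - c (j*p) y₀) := by
          simp only [hlab] at hlabeq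
          exact hlabeq.symm
        have E3 : dist (c (j*p) y - c (j*p) y₀) (c (j*p) y' - c (j*p) y₀) < ε/8 + ε/8 := by
          have hq1 := hqd (c (j*p) y - c (j*p) y₀)
          have hq2 := hqd (c (j*p) y' - c (j*p) y₀)
          calc dist (c (j*p) y - c (j*p) y₀) (c (j*p) y' - c (j*p) y₀)
              ≤ dist (c (j*p) y - c (j*p) y₀) (q (c (j*p) y - c (j*p) y₀))
                + dist (q (c (j*p) y - c (j*p) y₀)) (c (j*p) y' - c (j*p) y₀) :=
                dist_triangle _ _ _
            _ = dist (c (j*p) y - c (j*p) y₀) (q (c (j*p) y - c (j*p) y₀))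
                + dist (q (c (j*p) y' - c (j*p) y₀)) (c (j*p) y' - c (j*p) y₀) := by rw [hqe]
            _ < ε/8 + ε/8 := add_lt_add hq1 (by rw [dist_comm]; exact hq2)
        have Ec : dist (c k y') (c k y) < ε/2 := by
          have h0 : dist (c k y') (c k y) = dist (c k y' - c k y₀) (c k y - c k y₀) :=
            (dist_sub_right _ _ _).symm
          rw [h0]
          calc dist (c k y' - c k y₀) (c k y - c k y₀)
              ≤ dist (c k y' - c k y₀) (c (j*p) y' - c (j*p) y₀)
                + dist (c (j*p) y' - c (j*p) y₀) (c (j*p) y - c (j*p) y₀)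
                + dist (c (j*p) y - c (j*p) y₀) (c k y - c k y₀) := dist_triangle4 _ _ _ _
            _ < ε/8 + (ε/8 + ε/8) + ε/8 := by
                have h5 : dist (c (j*p) y' - c (j*p) y₀) (c (j*p) y - c (j*p) y₀) < ε/8 + ε/8 := by
                  rw [dist_comm]; exact E3
                have h6 : dist (c (j*p) y - c (j*p) y₀) (c k y - c k y₀) ≤ ε/8 := by
                  rw [dist_comm]; exact E1
                linarith [E2]
            _ = ε/2 := by ring
        calc dist (q g + c k y') (g + c k y)
            ≤ dist (q g) g + dist (c k y') (c k y) := dist_add_add_le _ _ _ _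
          _ < ε/8 + ε/2 := by
              have := hqd g
              rw [dist_comm (q g) g]
              exact add_lt_add this Ec
          _ ≤ ε := by linarith
    have hcard : (t.card : ℕ∞) ≤ (s.card : ℕ∞) * (N.card : ℕ∞) ^ (n / p + 2) := by
      have h1 : t.card ≤ s.card * (N.card ^ r * N.card) := by
        calc t.card ≤ (s ×ˢ ((Finset.univ : Finset (Fin r → {a // a ∈ N})) ×ˢ N)).card :=
              Finset.card_image_le
          _ = s.card * ((Finset.univ : Finset (Fin r → {a // a ∈ N})).card * N.card) := by
              rw [Finset.card_product, Finset.card_product]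
          _ = s.card * (N.card ^ r * N.card) := by
              rw [Finset.card_univ, Fintype.card_fun, Fintype.card_coe, Fintype.card_fin]
      calc (t.card : ℕ∞) ≤ ((s.card * (N.card ^ r * N.card) : ℕ) : ℕ∞) := by exact_mod_cast h1
        _ = (s.card : ℕ∞) * (N.card : ℕ∞) ^ (n / p + 2) := by
            push_cast
            rw [← pow_succ]
    calc coverMincard Text Set.univ {u : (Y × 𝕋) × (Y × 𝕋) | dist u.1 u.2 < ε} n
        ≤ (t.card : ℕ∞) := hcov.coverMincard_le_card
      _ ≤ (s.card : ℕ∞) * (N.card : ℕ∞) ^ (n / p + 2) := hcard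
      _ = coverMincard S Set.univ {u : Y × Y | dist u.1 u.2 < δ} n
            * (N.card : ℕ∞) ^ (n / p + 2) := by rw [hs_card]

/-- Main extension lemma: a circle extension of a zero-entropy system has zero entropy. -/
private lemma ext_zero {Y : Type*} [MetricSpace Y] [CompactSpace Y] (S : Y → Y)
    (φ : Y → 𝕋) (hφ : Continuous φ) (hS : coverEntropy S Set.univ ≤ 0) :
    coverEntropy (fun p : Y × 𝕋 => (S p.1, p.2 + φ p.1)) Set.univ ≤ 0 := by
  rcases isEmpty_or_nonempty Y with hY | hY
  · have he : (Set.univ : Set (Y × 𝕋)) = ∅ := Set.eq_empty_of_isEmpty _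
    rw [he, coverEntropy_empty]
    exact bot_le
  rw [coverEntropy_eq_iSup_basis Metric.uniformity_basis_dist]
  refine iSup₂_le fun ε hε => ?_
  refine le_of_forall_gt_imp_ge_of_dense fun a ha => ?_
  obtain ⟨cr, hcr0, hcra⟩ := EReal.exists_between_coe_real ha
  have hc : (0 : ℝ) < cr := EReal.coe_pos.1 hcr0
  refine le_trans ?_ hcra.le
  -- a finite (ε/8)-net of the circle
  obtain ⟨tset, -, htfin, htcov⟩ :=
    finite_cover_balls_of_compact (isCompact_univ : IsCompact (Set.univ : Set 𝕋))
      (by positivity : (0:ℝ) < ε/8)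
  have hqex : ∀ g : 𝕋, ∃ a, a ∈ htfin.toFinset ∧ dist g a < ε/8 := by
    intro g
    have hg := htcov (Set.mem_univ g)
    rw [Set.mem_iUnion₂] at hg
    obtain ⟨x, hxt, hxb⟩ := hg
    exact ⟨x, htfin.mem_toFinset.2 hxt, by simpa [Metric.mem_ball] using hxb⟩
  choose q hqN hqd using hqex
  set N : Finset 𝕋 := htfin.toFinset with hN
  have hK1 : 1 ≤ N.card := Finset.card_pos.2 ⟨q 0, hqN 0⟩
  set lk : ℝ := Real.log N.card with hlk
  have hlk0 : 0 ≤ lk := Real.log_natCast_nonneg _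
  set p : ℕ := ⌈(2*lk)/cr⌉₊ + 1 with hpdef
  have hp0 : 0 < p := Nat.succ_pos _
  have hpr : (0:ℝ) < p := by exact_mod_cast hp0
  have hpc : lk / p ≤ cr / 2 := by
    have h1 : (2*lk)/cr < p := by
      have h2 := Nat.le_ceil ((2*lk)/cr)
      have h3 : ((⌈(2*lk)/cr⌉₊ : ℕ) : ℝ) < p := by exact_mod_cast Nat.lt_succ_self _
      linarith
    rw [div_le_div_iff₀ hpr (by norm_num : (0:ℝ) < 2)]
    have h4 : 2*lk < cr * p := by
      have := (div_lt_iff₀ hc).1 h1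
      linarith
    linarith
  obtain ⟨δ₀, hδ₀, hδmod⟩ := Metric.uniformContinuous_iff.1
    (CompactSpace.uniformContinuous_of_continuous hφ) (ε/8/p) (by positivity)
  have hδ0 : 0 < min δ₀ (ε/2) := lt_min hδ₀ (by positivity)
  have hδε : min δ₀ (ε/2) ≤ ε/2 := min_le_right _ _
  have hmod : ∀ y y' : Y, dist y y' < min δ₀ (ε/2) → dist (φ y) (φ y') < ε/8/p := fun y y' h =>
    hδmod (lt_of_lt_of_le h (min_le_left _ _))
  have key := fun n => key_cover S φ hε hδ0 hδε hp0 hmod N q hqN hqd n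
  have hlogK : ENNReal.log ((N.card : ℕ∞) : ℝ≥0∞) = (lk : EReal) := by
    rw [ENat.toENNReal_coe,
      ENNReal.log_pos_real (by exact_mod_cast (Nat.lt_of_lt_of_le Nat.zero_lt_one hK1).ne')
        (ENNReal.natCast_ne_top _),
      ENNReal.toReal_natCast]
  have main : ∀ᶠ n in Filter.atTop,
      log (coverMincard (fun pt : Y × 𝕋 => (S pt.1, pt.2 + φ pt.1)) Set.univ
          {u : (Y × 𝕋) × (Y × 𝕋) | dist u.1 u.2 < ε} n) / n ≤
      log (coverMincard S Set.univ {u : Y × Y | dist u.1 u.2 < min δ₀ (ε/2)} n) / n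
        + (cr : EReal) := by
    filter_upwards [Filter.eventually_ge_atTop (⌈(4*lk)/cr⌉₊ + 1)] with n hn
    have hn0 : 0 < n := lt_of_lt_of_le (Nat.succ_pos _) hn
    have hn0' : (0 : EReal) < n := by exact_mod_cast hn0
    have step1 : log (coverMincard (fun pt : Y × 𝕋 => (S pt.1, pt.2 + φ pt.1)) Set.univ
          {u : (Y × 𝕋) × (Y × 𝕋) | dist u.1 u.2 < ε} n) ≤
        log (coverMincard S Set.univ {u : Y × Y | dist u.1 u.2 < min δ₀ (ε/2)} n)
          + ((n/p+2 : ℕ) : EReal) * (lk : EReal) := by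
      have h5 := log_monotone (ENat.toENNReal_le.2 (key n))
      refine h5.trans (le_of_eq ?_)
      rw [ENat.toENNReal_mul, ENNReal.log_mul_add, ENat.toENNReal_pow, ENNReal.log_pow, hlogK]
    have step2 := div_le_div_right_of_nonneg (le_of_lt hn0') step1
    refine step2.trans ?_
    rw [div_right_distrib_of_nonneg (by rw [← log_one]; exact log_monotone (by rw [← ENat.toENNReal_one, ENat.toENNReal_le]; exact (one_le_coverMincard_iff S Set.univ _ n).2 Set.univ_nonempty))
      (mul_nonneg (Nat.cast_nonneg' _) (by exact_mod_cast hlk0))]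
    refine add_le_add_right ?_ _
    rw [EReal.div_le_iff_le_mul hn0' (EReal.natCast_ne_top n)]
    have hreal : (((n/p+2 : ℕ)) : ℝ) * lk ≤ cr * n := by
      have hnp : ((n/p : ℕ) : ℝ) ≤ (n : ℝ)/(p : ℝ) := Nat.cast_div_le
      have hnlk : 4*lk/cr ≤ (n : ℝ) := by
        calc 4*lk/cr ≤ (⌈(4*lk)/cr⌉₊ : ℝ) := Nat.le_ceil _
          _ ≤ (n : ℝ) := by exact_mod_cast le_trans (Nat.le_succ _) hn
      have hnn : (0:ℝ) ≤ (n:ℝ) := Nat.cast_nonneg _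
      have h6 : ((n/p : ℕ) : ℝ) * lk ≤ (n:ℝ) * (cr/2) := by
        calc ((n/p : ℕ) : ℝ) * lk ≤ ((n:ℝ)/(p:ℝ)) * lk :=
              mul_le_mul_of_nonneg_right hnp hlk0
          _ = (n:ℝ) * (lk/p) := by ring
          _ ≤ (n:ℝ) * (cr/2) := mul_le_mul_of_nonneg_left hpc hnn
      have h7 : 2*lk ≤ (n:ℝ) * (cr/2) := by
        have := (div_le_iff₀ hc).1 hnlk
        nlinarith
      push_cast
      nlinarith
    have hcast : (((n/p+2 : ℕ)) : EReal) * (lk : EReal) = (((((n/p+2 : ℕ)) : ℝ) * lk : ℝ) : EReal) := by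
      rw [EReal.coe_mul]
      norm_cast
    rw [hcast]
    rw [show ((n : ℕ) : EReal) * (cr : EReal) = (((n : ℝ) * cr : ℝ) : EReal) by norm_cast]
    exact EReal.coe_le_coe_iff.2 (by linarith [hreal])
  have hfeq : (fun n : ℕ => log (coverMincard S Set.univ
        {u : Y × Y | dist u.1 u.2 < min δ₀ (ε/2)} n) / n + (cr : EReal)) =
      (fun n : ℕ => log (coverMincard S Set.univ
        {u : Y × Y | dist u.1 u.2 < min δ₀ (ε/2)} n) / n) + (fun _ : ℕ => (cr : EReal)) := rfl
  have hent0 : (0 : EReal) ≤ coverEntropyEntourage S Set.univ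
      {u : Y × Y | dist u.1 u.2 < min δ₀ (ε/2)} :=
    coverEntropyEntourage_nonneg S Set.univ_nonempty _
  calc coverEntropyEntourage (fun pt : Y × 𝕋 => (S pt.1, pt.2 + φ pt.1)) Set.univ
        {u : (Y × 𝕋) × (Y × 𝕋) | dist u.1 u.2 < ε}
      ≤ Filter.atTop.limsup (fun n : ℕ => log (coverMincard S Set.univ
          {u : Y × Y | dist u.1 u.2 < min δ₀ (ε/2)} n) / n + (cr : EReal)) :=
        limsup_le_limsup main
    _ ≤ coverEntropyEntourage S Set.univ {u : Y × Y | dist u.1 u.2 < min δ₀ (ε/2)}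
          + Filter.atTop.limsup (fun _ : ℕ => (cr : EReal)) := by
        rw [hfeq]
        refine EReal.limsup_add_le (Or.inl ?_) (Or.inr ?_)
        · have hne : coverEntropyEntourage S Set.univ
              {u : Y × Y | dist u.1 u.2 < min δ₀ (ε/2)} ≠ ⊥ := by
            intro h
            rw [h] at hent0
            exact absurd hent0 (by simp)
          exact hne
        · rw [limsup_const]; exact EReal.coe_ne_bot cr
    _ = coverEntropyEntourage S Set.univ {u : Y × Y | dist u.1 u.2 < min δ₀ (ε/2)}
          + (cr : EReal) := by rw [limsup_const]
    _ ≤ 0 + (cr : EReal) := by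
        refine add_le_add_left ?_ _
        exact le_trans (coverEntropyEntourage_le_coverEntropy S _
          (Metric.dist_mem_uniformity hδ0)) hS
    _ = (cr : EReal) := zero_add _


private lemma coverEntropy_Wmap_le {α : 𝕋} {f : 𝕋 → 𝕋} (hf : Continuous f) (k : ℕ) :
    coverEntropy (Wmap α f k) Set.univ ≤ 0 := by
  induction k with
  | zero => exact coverEntropy_le_zero_of_subsingleton _
  | succ k ih =>
    have hText := ext_zero (Wmap α f k) (phiK α f k) (continuous_phiK hf k) ih
    set ψ : ((Fin k → 𝕋) × 𝕋) → (Fin (k+1) → 𝕋) := fun p => Fin.snoc p.1 p.2 with hψ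
    have hψc : Continuous ψ := by
      apply continuous_pi; intro j
      induction j using Fin.lastCases with
      | last => simpa only [hψ, Fin.snoc_last] using continuous_snd
      | cast j => simpa only [hψ, Fin.snoc_castSucc] using show Continuous fun a : (Fin k → 𝕋) × 𝕋 => a.1 j from (continuous_apply j).comp continuous_fst
    have hψu : UniformContinuous ψ := CompactSpace.uniformContinuous_of_continuous hψc
    have hsemi : Function.Semiconj ψ
        (fun p : (Fin k → 𝕋) × 𝕋 => (Wmap α f k p.1, p.2 + phiK α f k p.1))
        (Wmap α f (k+1)) := by
      intro p
      show Fin.snoc (Wmap α f k p.1) (p.2 + phiK α f k p.1) = Wmap α f (k+1) (Fin.snoc p.1 p.2)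
      rw [Wmap_snoc]
    have hsurj : Function.Surjective ψ := fun x =>
      ⟨(Fin.init x, x (Fin.last k)), Fin.snoc_init_self x⟩
    have himg := coverEntropy_image_le_of_uniformContinuous hsemi hψu Set.univ
    rw [Set.image_univ, hsurj.range_eq] at himg
    exact himg.trans hText

end Entropy

end Aux


/-- For `m ≥ 2`, `α ∈ 𝕋 = ℝ/ℤ`, and continuous `f : 𝕋 → 𝕋`, the skew
product `T(x_1, …, x_m) = (x_1 + α, x_2 + f(x_1), x_3 + x_2, …, x_m + x_{m-1})` is a
homeomorphism of `𝕋^m` with zero topological entropy. -/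
theorem stmt11 (m : ℕ) (hm : 2 ≤ m) (α : UnitAddCircle)
    (f : UnitAddCircle → UnitAddCircle) (hf : Continuous f)
    (T : (Fin m → UnitAddCircle) → (Fin m → UnitAddCircle))
    (hT : ∀ (x : Fin m → UnitAddCircle) (i : Fin m),
      T x i = x i +
        (if (i : ℕ) = 0 then α
         else if (i : ℕ) = 1 then f (x ⟨0, by omega⟩)
         else x ⟨(i : ℕ) - 1, by have := i.isLt; omega⟩)) :
    IsHomeomorph T ∧ Dynamics.coverEntropy T Set.univ = 0 := by
  have hTW : T = Wmap α f m := by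
    funext x
    funext i
    rw [hT x i]
    rfl
  constructor
  · rw [hTW]; exact isHomeomorph_Wmap hf m
  · rw [hTW]
    exact le_antisymm (coverEntropy_Wmap_le hf m)
      (Dynamics.coverEntropy_nonneg _ Set.univ_nonempty)
end
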